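/- Let 0<β<1 and ε>0, and define n_k = ⌊k^(1/(1-β)+ε)⌋ for k ∈ ℕ. Then for every M>0 there exists n₀ ∈ ℕ such that for all n > n₀, the interval [n - M·n^β, n + M·n^β] contains at most one element of the sequence {n_k}. -/

import Mathlib

/-!
Write `α = 1/(1-β) + ε > 1` and `γ = 1 - 1/α`, so that `β < γ`. By Bernoulli,
`(x+1)^α ≥ x^α + α x^(α-1)`, and `x^(α-1) = (x^α)^γ`; hence a value `u` of `⌊k^α⌋` is followed
by a value exceeding `u + α u^γ - 1`. A window `[n - M n^β, n + M n^β]` lies above `n/2` for large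
`n`, so two distinct values in it would be at least `α (n/2)^γ - 1` apart, which eventually
exceeds the window length `2 M n^β`.
-/

open Filter Real

lemma rpow_add_mul_rpow_sub_one_le_add_one_rpow {x α : ℝ} (hx : 0 < x) (hα : 1 ≤ α) :
    x ^ α + α * x ^ (α - 1) ≤ (x + 1) ^ α := by
  have hbern : 1 + α * x⁻¹ ≤ (1 + x⁻¹) ^ α :=
    one_add_mul_self_le_rpow_one_add (by linarith [inv_pos.2 hx]) hα
  calc x ^ α + α * x ^ (α - 1) = x ^ α * (1 + α * x⁻¹) := by
        rw [rpow_sub_one hx.ne']; field_simp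
    _ ≤ x ^ α * (1 + x⁻¹) ^ α := by gcongr
    _ = (x + 1) ^ α := by
        rw [← mul_rpow hx.le (by positivity)]; congr 1; field_simp

lemma rpow_sub_one_eq_rpow_rpow {x α : ℝ} (hx : 0 ≤ x) (hα : α ≠ 0) :
    x ^ (α - 1) = (x ^ α) ^ (1 - α⁻¹) := by
  rw [← rpow_mul hx]; congr 1; field_simp

lemma mul_floor_rpow_rpow_sub_one_lt_sub {α : ℝ} (hα : 1 < α) {a b : ℕ} (hab : a < b) :
    α * (⌊(a : ℝ) ^ α⌋₊ : ℝ) ^ (1 - α⁻¹) - 1 < ⌊(b : ℝ) ^ α⌋₊ - ⌊(a : ℝ) ^ α⌋₊ := by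
  have hγ : 1 - α⁻¹ ≠ 0 := by
    have : α⁻¹ < 1 := inv_lt_one_of_one_lt₀ hα
    linarith
  rcases Nat.eq_zero_or_pos a with rfl | ha
  · simp only [CharP.cast_eq_zero, zero_rpow (by linarith : α ≠ 0), Nat.floor_zero, zero_rpow hγ]
    linarith [Nat.cast_nonneg (α := ℝ) ⌊(b : ℝ) ^ α⌋₊]
  have hfloor_a : (⌊(a : ℝ) ^ α⌋₊ : ℝ) ≤ (a : ℝ) ^ α := Nat.floor_le (by positivity)
  have hfloor_b : ((a : ℝ) + 1) ^ α - 1 < ⌊(b : ℝ) ^ α⌋₊ := by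
    have hb : ((a : ℝ) + 1) ^ α ≤ (b : ℝ) ^ α := by
      gcongr; exact_mod_cast hab
    linarith [Nat.lt_floor_add_one ((b : ℝ) ^ α)]
  have hjump := rpow_add_mul_rpow_sub_one_le_add_one_rpow (x := (a : ℝ)) (by positivity) hα.le
  have hpow : (⌊(a : ℝ) ^ α⌋₊ : ℝ) ^ (1 - α⁻¹) ≤ (a : ℝ) ^ (α - 1) := by
    rw [rpow_sub_one_eq_rpow_rpow (by positivity) (by linarith)]
    gcongr
    linarith [inv_lt_one_of_one_lt₀ hα]
  nlinarith

lemma eventually_mul_rpow_add_lt_mul_rpow {A B C c d : ℝ} (hA : 0 < A) (hd : 0 ≤ d)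
    (hdc : d < c) (hC : 0 ≤ C) : ∀ᶠ x : ℝ in atTop, B * x ^ d + C < A * x ^ c := by
  have hratio : Tendsto (fun x : ℝ => A * x ^ (c - d)) atTop atTop :=
    (tendsto_rpow_atTop (by linarith)).const_mul_atTop hA
  filter_upwards [hratio.eventually_ge_atTop (B + C + 1), eventually_ge_atTop (1 : ℝ)]
    with x hx hx1
  have hxd : 1 ≤ x ^ d := one_le_rpow hx1 hd
  have hsplit : A * x ^ c = A * x ^ (c - d) * x ^ d := by
    rw [mul_assoc, ← rpow_add (by linarith)]; ring_nf
  have : (B + C + 1) * x ^ d ≤ A * x ^ (c - d) * x ^ d := by gcongr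
  nlinarith

theorem floor_rpow_spaced {α β : ℝ} (hα : 1 < α) (hβ0 : 0 ≤ β) (hβα : β < 1 - α⁻¹) (M : ℝ) :
    ∃ n₀ : ℕ, ∀ n : ℕ, n₀ < n → ∀ k l : ℕ,
      ((n : ℝ) - M * (n : ℝ) ^ β ≤ ⌊(k : ℝ) ^ α⌋₊ ∧ (⌊(k : ℝ) ^ α⌋₊ : ℝ) ≤ n + M * (n : ℝ) ^ β) →
      ((n : ℝ) - M * (n : ℝ) ^ β ≤ ⌊(l : ℝ) ^ α⌋₊ ∧ (⌊(l : ℝ) ^ α⌋₊ : ℝ) ≤ n + M * (n : ℝ) ^ β) →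
      ⌊(k : ℝ) ^ α⌋₊ = ⌊(l : ℝ) ^ α⌋₊ := by
  set γ := 1 - α⁻¹
  have hβ1 : β < 1 := hβα.trans (sub_lt_self 1 (inv_pos.2 (by linarith)))
  have hwidth : ∀ᶠ x : ℝ in atTop, M * x ^ β + 0 < 2⁻¹ * x ^ (1 : ℝ) :=
    eventually_mul_rpow_add_lt_mul_rpow (by norm_num) hβ0 (by linarith) le_rfl
  have hgap : ∀ᶠ x : ℝ in atTop, 2 * M * x ^ β + 1 < α / 2 ^ γ * x ^ γ :=
    eventually_mul_rpow_add_lt_mul_rpow (by positivity) hβ0 hβα zero_le_one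
  obtain ⟨n₀, hn₀⟩ := eventually_atTop.1 (tendsto_natCast_atTop_atTop.eventually (hwidth.and hgap))
  refine ⟨n₀, fun n hn => ?_⟩
  obtain ⟨hwidth_n, hgap_n⟩ := hn₀ n hn.le
  rw [rpow_one, add_zero] at hwidth_n
  have hspread : ∀ a b : ℕ, ⌊(a : ℝ) ^ α⌋₊ < ⌊(b : ℝ) ^ α⌋₊ →
      (n : ℝ) - M * (n : ℝ) ^ β ≤ ⌊(a : ℝ) ^ α⌋₊ → (⌊(b : ℝ) ^ α⌋₊ : ℝ) ≤ n + M * (n : ℝ) ^ β →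
      False := by
    intro a b hfloor ha hb
    have hab : a < b := by
      contrapose! hfloor
      exact Nat.floor_mono (by gcongr)
    have hlow : α / 2 ^ γ * (n : ℝ) ^ γ ≤ α * (⌊(a : ℝ) ^ α⌋₊ : ℝ) ^ γ := by
      rw [div_mul_eq_mul_div, mul_div_assoc, ← div_rpow (by positivity) (by norm_num)]
      gcongr
      all_goals linarith
    linarith [mul_floor_rpow_rpow_sub_one_lt_sub hα hab]
  intro k l hk hl
  rcases lt_trichotomy ⌊(k : ℝ) ^ α⌋₊ ⌊(l : ℝ) ^ α⌋₊ with h | h | h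
  · exact (hspread k l h hk.1 hl.2).elim
  · exact h
  · exact (hspread l k h hl.1 hk.2).elim

/-- The sequence `n_k = ⌊k^(1/(1-β)+ε)⌋` is β-spaced: for every `M > 0`
there is `n₀` such that for all `n > n₀` the interval `[n - M n^β, n + M n^β]`
contains at most one element of the sequence. -/
theorem stmt0 (β ε : ℝ) (hβ0 : 0 < β) (hβ1 : β < 1) (hε : 0 < ε)
    (nk : ℕ → ℕ)
    (hnk : ∀ k : ℕ, nk k = ⌊(k : ℝ) ^ (1 / (1 - β) + ε)⌋₊) :
    ∀ M : ℝ, 0 < M → ∃ n₀ : ℕ, ∀ n : ℕ, n₀ < n →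
      ∀ k l : ℕ,
        ((n : ℝ) - M * (n : ℝ) ^ β ≤ nk k ∧ (nk k : ℝ) ≤ (n : ℝ) + M * (n : ℝ) ^ β) →
        ((n : ℝ) - M * (n : ℝ) ^ β ≤ nk l ∧ (nk l : ℝ) ≤ (n : ℝ) + M * (n : ℝ) ^ β) →
        nk k = nk l := by
  intro M _
  obtain rfl : nk = fun k : ℕ => ⌊(k : ℝ) ^ (1 / (1 - β) + ε)⌋₊ := funext hnk
  have h1β : 0 < 1 - β := sub_pos.2 hβ1
  have hα : 1 < 1 / (1 - β) + ε := by
    linarith [one_le_one_div h1β (by linarith : 1 - β ≤ 1)]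
  have hβα : β < 1 - (1 / (1 - β) + ε)⁻¹ := by
    have : (1 / (1 - β) + ε)⁻¹ < 1 - β := by
      rw [inv_lt_comm₀ (by linarith) h1β, ← one_div]
      linarith
    linarith
  exact floor_rpow_spaced hα hβ0.le hβα M
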